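/- Let A be a subfield of a field B and let D = A + X·B[X]. Then the irreducible elements of D are exactly the elements aX with a ∈ B, a ≠ 0, together with the elements a(1 + Xf(X)) with a ∈ A, a ≠ 0, f ∈ B[X], such that 1 + Xf(X) is irreducible in B[X]. -/

import Mathlib

/-- The polynomial composite `A + X·B[X]`: the subring of `B[X]` of polynomials
whose constant coefficient lies in `A`. -/
def Subring.composite {B : Type*} [CommRing B] (A : Subring B) : Subring (Polynomial B) where
  carrier := {f : Polynomial B | f.coeff 0 ∈ A}
  mul_mem' {f g} hf hg := by
    simp only [Set.mem_setOf_eq, Polynomial.mul_coeff_zero] at *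
    exact mul_mem hf hg
  one_mem' := by
    simp only [Set.mem_setOf_eq, Polynomial.coeff_one_zero]
    exact one_mem A
  add_mem' {f g} hf hg := by
    simp only [Set.mem_setOf_eq, Polynomial.coeff_add] at *
    exact add_mem hf hg
  zero_mem' := by
    simp only [Set.mem_setOf_eq, Polynomial.coeff_zero]
    exact zero_mem A
  neg_mem' {f} hf := by
    simp only [Set.mem_setOf_eq, Polynomial.coeff_neg] at *
    exact neg_mem hf

theorem Subring.mem_composite {B : Type*} [CommRing B] (A : Subring B) (f : Polynomial B) :
    f ∈ A.composite ↔ f.coeff 0 ∈ A := Iff.rfl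

/-!
Write `D = A + X·B[X]`. The units of `D` are the units of `B[X]` that lie in `D` (nonzero
constants of `A`), so an element of `D` irreducible in `B[X]` stays irreducible in `D`; this gives
the backward direction, as `aX` and `a(1 + Xf)` are associates of `X` and `1 + Xf` in `B[X]`.
Conversely, a factorization `g = p q` in `B[X]` with `q(0) ≠ 0` is rescaled to
`g = (q(0) p)(q(0)⁻¹ q)` with both factors in `D`. If `g(0) ≠ 0` every factorization has this
form, so `g` is irreducible in `B[X]` and equals `g(0)(1 + Xf)`. If `g(0) = 0`, write `g = X k`:
either `k(0) ≠ 0` and the rescaling forces `k` to be a unit, or `k ∈ D` and `g = X · k`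
already factors in `D` with neither factor a unit.
-/

namespace Polynomial

theorem eq_C_mul_one_add_X_mul {K : Type*} [Field K] (p : K[X]) (h : p.coeff 0 ≠ 0) :
    p = C (p.coeff 0) * (1 + X * (C (p.coeff 0)⁻¹ * p.divX)) := by
  have hC : C (p.coeff 0) * C (p.coeff 0)⁻¹ = 1 := by rw [← C_mul, mul_inv_cancel₀ h, C_1]
  conv_lhs => rw [← X_mul_divX_add p]
  linear_combination (-(X * p.divX)) * hC

end Polynomial

namespace Subfield

open Polynomial

variable {B : Type*} [Field B] {A : Subfield B}

instance isLocalHom_composite_subtype : IsLocalHom A.toSubring.composite.subtype where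
  map_nonunit u hu := by
    obtain ⟨r, hr, hru⟩ := Polynomial.isUnit_iff.mp hu
    rw [Subring.subtype_apply] at hru
    have hrA : r ∈ A := by simpa [← hru] using (Subring.mem_composite _ _).mp u.2
    have hinv : C r⁻¹ ∈ A.toSubring.composite :=
      (Subring.mem_composite _ _).mpr (by simpa using A.inv_mem hrA)
    refine isUnit_iff_exists_inv.mpr ⟨⟨C r⁻¹, hinv⟩, Subtype.ext ?_⟩
    rw [Subring.coe_mul, ← hru, ← C_mul, mul_inv_cancel₀ hr.ne_zero, C_1, Subring.coe_one]

theorem isUnit_or_isUnit_of_irreducible_composite {g : A.toSubring.composite} (hg : Irreducible g)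
    {p q : B[X]} (hpq : (g : B[X]) = p * q) (hq : q.coeff 0 ≠ 0) : IsUnit p ∨ IsUnit q := by
  set b := q.coeff 0
  have hp' : C b * p ∈ A.toSubring.composite := by
    have hg0 := (Subring.mem_composite _ _).mp g.2
    rw [hpq, mul_coeff_zero, mul_comm] at hg0
    rwa [Subring.mem_composite, coeff_C_mul]
  have hq' : C b⁻¹ * q ∈ A.toSubring.composite := by
    rw [Subring.mem_composite, coeff_C_mul, inv_mul_cancel₀ hq]
    exact one_mem A
  have hfactor : g = ⟨C b * p, hp'⟩ * ⟨C b⁻¹ * q, hq'⟩ := by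
    ext1
    rw [hpq, Subring.coe_mul, mul_mul_mul_comm, ← C_mul, mul_inv_cancel₀ hq, C_1, one_mul]
  exact (hg.isUnit_or_isUnit hfactor).imp
    (fun h => isUnit_of_mul_isUnit_right (h.map A.toSubring.composite.subtype))
    (fun h => isUnit_of_mul_isUnit_right (h.map A.toSubring.composite.subtype))

theorem irreducible_coe_of_irreducible_composite {g : A.toSubring.composite} (hg : Irreducible g)
    (hc : (g : B[X]).coeff 0 ≠ 0) : Irreducible (g : B[X]) where
  not_isUnit h := hg.not_isUnit (isUnit_of_map_unit A.toSubring.composite.subtype g h)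
  isUnit_or_isUnit := by
    intro p q hpq
    have hpq0 : p.coeff 0 * q.coeff 0 ≠ 0 := by rwa [← mul_coeff_zero, ← hpq]
    exact isUnit_or_isUnit_of_irreducible_composite hg hpq (right_ne_zero_of_mul hpq0)

theorem exists_eq_C_mul_X_of_irreducible_composite {g : A.toSubring.composite}
    (hg : Irreducible g) (hc : (g : B[X]).coeff 0 = 0) : ∃ a : B, a ≠ 0 ∧ (g : B[X]) = C a * X := by
  set k := (g : B[X]).divX
  have hgk : (g : B[X]) = X * k := by
    simpa [hc] using (X_mul_divX_add (g : B[X])).symm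
  suffices hk : IsUnit k by
    obtain ⟨a, ha, hak⟩ := Polynomial.isUnit_iff.mp hk
    exact ⟨a, ha.ne_zero, by rw [hgk, ← hak, mul_comm]⟩
  by_cases hk0 : k.coeff 0 = 0
  · have hX : (X : B[X]) ∈ A.toSubring.composite := by simp [Subring.mem_composite]
    have hk : k ∈ A.toSubring.composite := by simp [Subring.mem_composite, hk0]
    have hfactor : g = ⟨X, hX⟩ * ⟨k, hk⟩ := Subtype.ext hgk
    refine (hg.isUnit_or_isUnit hfactor).elim (fun h => ?_) (fun h => ?_)
    · exact absurd (h.map A.toSubring.composite.subtype) not_isUnit_X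
    · exact absurd ((h.map A.toSubring.composite.subtype).map constantCoeff) (by simp [hk0])
  · exact (isUnit_or_isUnit_of_irreducible_composite hg hgk hk0).resolve_left not_isUnit_X

end Subfield

open Polynomial in
theorem irreducible_composite_iff {B : Type*} [Field B] (A : Subfield B)
    (g : A.toSubring.composite) :
    Irreducible g ↔
      (∃ a : B, a ≠ 0 ∧ (g : Polynomial B) = C a * X) ∨
      (∃ a : B, a ∈ A ∧ a ≠ 0 ∧ ∃ f : Polynomial B,
        (g : Polynomial B) = C a * (1 + X * f) ∧ Irreducible (1 + X * f)) := by
  constructor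
  · intro hg
    by_cases hc : (g : B[X]).coeff 0 = 0
    · exact Or.inl (Subfield.exists_eq_C_mul_X_of_irreducible_composite hg hc)
    · have hg' := eq_C_mul_one_add_X_mul _ hc
      refine Or.inr ⟨_, g.2, hc, _, hg', ?_⟩
      refine (irreducible_isUnit_mul (isUnit_C.mpr (Ne.isUnit hc))).mp ?_
      rw [← hg']
      exact Subfield.irreducible_coe_of_irreducible_composite hg hc
  · rintro (⟨a, ha, hga⟩ | ⟨a, -, ha, f, hga, hf⟩) <;>
      refine Irreducible.of_map (f := A.toSubring.composite.subtype) ?_ <;>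
      simp only [Subring.subtype_apply, hga, irreducible_isUnit_mul (isUnit_C.mpr ha.isUnit)]
    exacts [irreducible_X, hf]
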